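/- arXiv:2002.02660 — 4 statements merged into one kernel-verified Lean document; each statement's English description precedes it below -/
import Mathlib

section
/- For every integer d ≥ 3 there exists a (3,d)-net in ℙ²(ℂ) (for instance, one is given by the Fermat arrangement of degree d). -/
open scoped LinearAlgebra.Projectivization

/-- The complex projective plane, as the projectivization of `ℂ³`. -/
abbrev P2 : Type := ℙ ℂ (Fin 3 → ℂ)

/-- A line in `ℙ²(ℂ)`: the set of points corresponding to the nonzero vectors of a
2-dimensional linear subspace of `ℂ³`. -/
def IsLine (L : Set P2) : Prop :=
  ∃ W : Submodule ℂ (Fin 3 → ℂ), Module.finrank ℂ W = 2 ∧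
    L = {p : P2 | Projectivization.submodule p ≤ W}

/-- An `(m,d)`-net in `ℙ²(ℂ)`: `m` pairwise disjoint sets of lines, each of cardinality `d`,
together with a finite set `X` of points, such that every point of `X` lies on exactly one
line of each class, and every intersection point of lines from two different classes lies
in `X`. -/
structure IsNet (m d : ℕ) (A : Fin m → Finset (Set P2)) (X : Finset P2) : Prop where
  isLine : ∀ i, ∀ L ∈ A i, IsLine L
  disjoint : ∀ i j, i ≠ j → Disjoint (A i) (A j)
  card_eq : ∀ i, (A i).card = d
  point_line : ∀ x ∈ X, ∀ i, ∃! L, L ∈ A i ∧ x ∈ L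
  inter_mem : ∀ i j, i ≠ j → ∀ L ∈ A i, ∀ L' ∈ A j, ∀ x, x ∈ L → x ∈ L' → x ∈ X

noncomputable instance : DecidableEq (Set P2) := Classical.decEq _
noncomputable instance : DecidableEq P2 := Classical.decEq _

/-- Auxiliary linear functional with coefficient vector `c`. -/
noncomputable def phi (c : Fin 3 → ℂ) : (Fin 3 → ℂ) →ₗ[ℂ] ℂ where
  toFun v := c 0 * v 0 + c 1 * v 1 + c 2 * v 2
  map_add' v w := by simp; ring
  map_smul' t v := by simp; ring

/-- The line with equation `c 0 * x + c 1 * y + c 2 * z = 0`. -/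
def lineSet (c : Fin 3 → ℂ) : Set P2 :=
  {p | Projectivization.submodule p ≤ LinearMap.ker (phi c)}

lemma mem_lineSet {c v : Fin 3 → ℂ} (hv : v ≠ 0) :
    Projectivization.mk ℂ v hv ∈ lineSet c ↔ c 0 * v 0 + c 1 * v 1 + c 2 * v 2 = 0 := by
  rw [lineSet, Set.mem_setOf_eq, Projectivization.submodule_mk,
    Submodule.span_singleton_le_iff_mem, LinearMap.mem_ker]
  rfl

lemma isLine_lineSet {c : Fin 3 → ℂ} (v : Fin 3 → ℂ) (h : phi c v ≠ 0) :
    IsLine (lineSet c) := by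
  refine ⟨LinearMap.ker (phi c), ?_, rfl⟩
  have hsurj : Function.Surjective (phi c) := by
    intro z
    refine ⟨(z / phi c v) • v, ?_⟩
    rw [map_smul, smul_eq_mul]
    field_simp
  have h1 := LinearMap.finrank_range_add_finrank_ker (phi c)
  rw [LinearMap.range_eq_top.mpr hsurj] at h1
  simp only [finrank_top, Module.finrank_self] at h1
  have h3 : Module.finrank ℂ (Fin 3 → ℂ) = 3 := by simp
  omega

lemma fin3_cases (i : Fin 3) : i = 0 ∨ i = 1 ∨ i = 2 := by
  fin_cases i <;> simp

lemma vne0 {v : Fin 3 → ℂ} (i : Fin 3) (h : v i ≠ 0) : v ≠ 0 :=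
  fun h0 => h (by rw [h0]; rfl)

/-- The Fermat arrangement: three classes of `d` lines each. -/
noncomputable def netA (d : ℕ) : Fin 3 → Finset (Set P2) := fun i =>
  if i = 0 then (Polynomial.nthRootsFinset d (1 : ℂ)).image (fun a => lineSet ![1, -a, 0])
  else if i = 1 then (Polynomial.nthRootsFinset d (1 : ℂ)).image (fun b => lineSet ![0, 1, -b])
  else (Polynomial.nthRootsFinset d (1 : ℂ)).image (fun c => lineSet ![1, 0, -c])

/-- The `d²` base points of the Fermat arrangement. -/
noncomputable def netX (d : ℕ) : Finset P2 :=
  ((Polynomial.nthRootsFinset d (1 : ℂ)) ×ˢ (Polynomial.nthRootsFinset d (1 : ℂ))).image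
    (fun p => Projectivization.mk ℂ ![p.1 * p.2, p.2, 1] (vne0 2 (by exact one_ne_zero)))

lemma mem_netX {d : ℕ} {p q : ℂ} (hp : p ∈ Polynomial.nthRootsFinset d (1 : ℂ))
    (hq : q ∈ Polynomial.nthRootsFinset d (1 : ℂ)) {v : Fin 3 → ℂ} (hv : v ≠ 0)
    (h0 : v 0 = p * q * v 2) (h1 : v 1 = q * v 2) (h2 : v 2 ≠ 0) :
    Projectivization.mk ℂ v hv ∈ netX d := by
  refine Finset.mem_image.mpr ⟨(p, q), Finset.mem_product.mpr ⟨hp, hq⟩, ?_⟩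
  rw [Projectivization.mk_eq_mk_iff]
  refine ⟨Units.mk0 (v 2)⁻¹ (inv_ne_zero h2), ?_⟩
  funext i
  fin_cases i <;> simp [Units.smul_def, h0, h1] <;> field_simp

/-- For every integer `d ≥ 3` there exists a `(3,d)`-net in `ℙ²(ℂ)`
(for instance the Fermat arrangement of degree `d`). -/
theorem exists_three_net (d : ℕ) (hd : 3 ≤ d) :
    ∃ (A : Fin 3 → Finset (Set P2)) (X : Finset P2), IsNet 3 d A X := by
  classical
  have hd0 : 0 < d := by omega
  set R : Finset ℂ := Polynomial.nthRootsFinset d (1 : ℂ) with hR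
  have hmem : ∀ {x : ℂ}, x ∈ R ↔ x ^ d = 1 := fun {x} => Polynomial.mem_nthRootsFinset hd0 (1 : ℂ)
  have hR0 : ∀ a ∈ R, a ≠ 0 := by
    intro a ha h0
    rw [hmem, h0, zero_pow hd0.ne'] at ha
    exact zero_ne_one ha
  have hRmul : ∀ a ∈ R, ∀ b ∈ R, a * b ∈ R := by
    intro a ha b hb
    rw [hmem] at *
    rw [mul_pow, ha, hb, mul_one]
  have hRdiv : ∀ a ∈ R, ∀ b ∈ R, a / b ∈ R := by
    intro a ha b hb
    rw [hmem] at *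
    rw [div_pow, ha, hb, div_one]
  have hcard : R.card = d :=
    (Complex.isPrimitiveRoot_exp d hd0.ne').card_nthRootsFinset
  have hA0 : netA d 0 = R.image (fun a => lineSet ![1, -a, 0]) := by simp [netA, hR]
  have hA1 : netA d 1 = R.image (fun b => lineSet ![0, 1, -b]) := by simp [netA, hR]
  have hA2 : netA d 2 = R.image (fun c => lineSet ![1, 0, -c]) := by simp [netA, hR]
  refine ⟨netA d, netX d, ?_, ?_, ?_, ?_, ?_⟩
  · -- isLine
    intro i L hL
    rcases fin3_cases i with rfl | rfl | rfl
    · rw [hA0] at hL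
      obtain ⟨a, _, rfl⟩ := Finset.mem_image.mp hL
      exact isLine_lineSet ![1, 0, 0] (by simp [phi])
    · rw [hA1] at hL
      obtain ⟨b, _, rfl⟩ := Finset.mem_image.mp hL
      exact isLine_lineSet ![0, 1, 0] (by simp [phi])
    · rw [hA2] at hL
      obtain ⟨c, _, rfl⟩ := Finset.mem_image.mp hL
      exact isLine_lineSet ![1, 0, 0] (by simp [phi])
  · -- disjoint
    have hAmem : ∀ a : ℂ,
        Projectivization.mk ℂ ![0, 0, 1] (vne0 2 one_ne_zero) ∈ lineSet ![1, -a, 0] := by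
      intro a; rw [mem_lineSet]; simp
    have hBmem : ∀ b : ℂ,
        Projectivization.mk ℂ ![1, 0, 0] (vne0 0 one_ne_zero) ∈ lineSet ![0, 1, -b] := by
      intro b; rw [mem_lineSet]; simp
    have hBnot : ∀ b ∈ R,
        Projectivization.mk ℂ ![0, 0, 1] (vne0 2 one_ne_zero) ∉ lineSet ![0, 1, -b] := by
      intro b hb h
      rw [mem_lineSet] at h
      simp at h
      exact hR0 b hb h
    have hCnot : ∀ c ∈ R,
        Projectivization.mk ℂ ![0, 0, 1] (vne0 2 one_ne_zero) ∉ lineSet ![1, 0, -c] := by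
      intro c hc h
      rw [mem_lineSet] at h
      simp at h
      exact hR0 c hc h
    have hCnot' : ∀ c : ℂ,
        Projectivization.mk ℂ ![1, 0, 0] (vne0 0 one_ne_zero) ∉ lineSet ![1, 0, -c] := by
      intro c h
      rw [mem_lineSet] at h
      simp at h
    have d01 : Disjoint (netA d 0) (netA d 1) := by
      rw [hA0, hA1, Finset.disjoint_left]
      rintro L hL hL'
      obtain ⟨a, _, rfl⟩ := Finset.mem_image.mp hL
      obtain ⟨b, hb, hEq⟩ := Finset.mem_image.mp hL'
      exact hBnot b hb (hEq ▸ hAmem a)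
    have d02 : Disjoint (netA d 0) (netA d 2) := by
      rw [hA0, hA2, Finset.disjoint_left]
      rintro L hL hL'
      obtain ⟨a, _, rfl⟩ := Finset.mem_image.mp hL
      obtain ⟨c, hc, hEq⟩ := Finset.mem_image.mp hL'
      exact hCnot c hc (hEq ▸ hAmem a)
    have d12 : Disjoint (netA d 1) (netA d 2) := by
      rw [hA1, hA2, Finset.disjoint_left]
      rintro L hL hL'
      obtain ⟨b, _, rfl⟩ := Finset.mem_image.mp hL
      obtain ⟨c, hc, hEq⟩ := Finset.mem_image.mp hL'
      exact hCnot' c (hEq ▸ hBmem b)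
    intro i j hij
    rcases fin3_cases i with rfl | rfl | rfl <;> rcases fin3_cases j with rfl | rfl | rfl <;>
      first
        | exact absurd rfl hij
        | exact d01 | exact d02 | exact d12
        | exact d01.symm | exact d02.symm | exact d12.symm
  · -- card_eq
    intro i
    rcases fin3_cases i with rfl | rfl | rfl
    · rw [hA0, Finset.card_image_of_injOn, hcard]
      intro a ha a' ha' h
      replace h : lineSet ![1, -a, 0] = lineSet ![1, -a', 0] := h
      have h1 : Projectivization.mk ℂ ![a, 1, 0] (vne0 1 one_ne_zero) ∈ lineSet ![1, -a, 0] := by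
        rw [mem_lineSet]; simp
      rw [h, mem_lineSet] at h1
      simp at h1
      linear_combination h1
    · rw [hA1, Finset.card_image_of_injOn, hcard]
      intro b hb b' hb' h
      replace h : lineSet ![0, 1, -b] = lineSet ![0, 1, -b'] := h
      have h1 : Projectivization.mk ℂ ![0, b, 1] (vne0 2 one_ne_zero) ∈ lineSet ![0, 1, -b] := by
        rw [mem_lineSet]; simp
      rw [h, mem_lineSet] at h1
      simp at h1
      linear_combination h1
    · rw [hA2, Finset.card_image_of_injOn, hcard]
      intro c hc c' hc' h
      replace h : lineSet ![1, 0, -c] = lineSet ![1, 0, -c'] := h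
      have h1 : Projectivization.mk ℂ ![c, 0, 1] (vne0 2 one_ne_zero) ∈ lineSet ![1, 0, -c] := by
        rw [mem_lineSet]; simp
      rw [h, mem_lineSet] at h1
      simp at h1
      linear_combination h1
  · -- point_line
    intro x hx i
    obtain ⟨⟨a, b⟩, hab, rfl⟩ := Finset.mem_image.mp hx
    obtain ⟨ha, hb⟩ := Finset.mem_product.mp hab
    have hbne : b ≠ 0 := hR0 b hb
    rcases fin3_cases i with rfl | rfl | rfl
    · refine ⟨lineSet ![1, -a, 0], ⟨hA0 ▸ Finset.mem_image_of_mem _ ha, ?_⟩, ?_⟩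
      · rw [mem_lineSet]; simp
      · rintro L ⟨hL, hxL⟩
        rw [hA0] at hL
        obtain ⟨a', _, rfl⟩ := Finset.mem_image.mp hL
        rw [mem_lineSet] at hxL
        simp at hxL
        have : a' = a := by
          rcases mul_eq_zero.mp (show (a' - a) * b = 0 by linear_combination -hxL) with h | h
          · linear_combination h
          · exact absurd h hbne
        rw [this]
    · refine ⟨lineSet ![0, 1, -b], ⟨hA1 ▸ Finset.mem_image_of_mem _ hb, ?_⟩, ?_⟩
      · rw [mem_lineSet]; simp
      · rintro L ⟨hL, hxL⟩
        rw [hA1] at hL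
        obtain ⟨b', _, rfl⟩ := Finset.mem_image.mp hL
        rw [mem_lineSet] at hxL
        simp at hxL
        have : b' = b := by linear_combination -hxL
        rw [this]
    · refine ⟨lineSet ![1, 0, -(a * b)], ⟨hA2 ▸ Finset.mem_image_of_mem _ (hRmul a ha b hb), ?_⟩, ?_⟩
      · rw [mem_lineSet]; simp
      · rintro L ⟨hL, hxL⟩
        rw [hA2] at hL
        obtain ⟨c', _, rfl⟩ := Finset.mem_image.mp hL
        rw [mem_lineSet] at hxL
        simp at hxL
        have : c' = a * b := by linear_combination -hxL
        rw [this]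
  · -- inter_mem
    have key01 : ∀ a ∈ R, ∀ b ∈ R, ∀ x : P2,
        x ∈ lineSet ![1, -a, 0] → x ∈ lineSet ![0, 1, -b] → x ∈ netX d := by
      intro a ha b hb x hxA hxB
      induction x using Projectivization.ind with
      | h v hv =>
        rw [mem_lineSet] at hxA hxB
        simp at hxA hxB
        have e1 : v 1 = b * v 2 := by linear_combination hxB
        have e0 : v 0 = a * b * v 2 := by linear_combination hxA + a * hxB
        have h2 : v 2 ≠ 0 := by
          intro h2
          apply hv
          funext i
          fin_cases i <;> simp_all
        exact mem_netX ha hb hv e0 e1 h2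
    have key02 : ∀ a ∈ R, ∀ c ∈ R, ∀ x : P2,
        x ∈ lineSet ![1, -a, 0] → x ∈ lineSet ![1, 0, -c] → x ∈ netX d := by
      intro a ha c hc x hxA hxC
      have hane := hR0 a ha
      have hcne := hR0 c hc
      induction x using Projectivization.ind with
      | h v hv =>
        rw [mem_lineSet] at hxA hxC
        simp at hxA hxC
        have e0 : v 0 = c * v 2 := by linear_combination hxC
        have e1 : v 1 = (c / a) * v 2 := by
          field_simp
          linear_combination -hxA + hxC
        have h2 : v 2 ≠ 0 := by
          intro h2
          apply hv
          funext i
          fin_cases i <;> simp_all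
        have e0' : v 0 = a * (c / a) * v 2 := by
          field_simp
          linear_combination e0
        exact mem_netX ha (hRdiv c hc a ha) hv e0' e1 h2
    have key12 : ∀ b ∈ R, ∀ c ∈ R, ∀ x : P2,
        x ∈ lineSet ![0, 1, -b] → x ∈ lineSet ![1, 0, -c] → x ∈ netX d := by
      intro b hb c hc x hxB hxC
      have hbne := hR0 b hb
      induction x using Projectivization.ind with
      | h v hv =>
        rw [mem_lineSet] at hxB hxC
        simp at hxB hxC
        have e1 : v 1 = b * v 2 := by linear_combination hxB
        have e0 : v 0 = (c / b) * b * v 2 := by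
          field_simp
          linear_combination hxC
        have h2 : v 2 ≠ 0 := by
          intro h2
          apply hv
          funext i
          fin_cases i <;> simp_all
        exact mem_netX (hRdiv c hc b hb) hb hv e0 e1 h2
    intro i j hij L hL L' hL' x hxL hxL'
    rcases fin3_cases i with rfl | rfl | rfl <;> rcases fin3_cases j with rfl | rfl | rfl <;>
      (try exact absurd rfl hij)
    · rw [hA0] at hL; rw [hA1] at hL'
      obtain ⟨a, ha, rfl⟩ := Finset.mem_image.mp hL
      obtain ⟨b, hb, rfl⟩ := Finset.mem_image.mp hL'
      exact key01 a ha b hb x hxL hxL'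
    · rw [hA0] at hL; rw [hA2] at hL'
      obtain ⟨a, ha, rfl⟩ := Finset.mem_image.mp hL
      obtain ⟨c, hc, rfl⟩ := Finset.mem_image.mp hL'
      exact key02 a ha c hc x hxL hxL'
    · rw [hA1] at hL; rw [hA0] at hL'
      obtain ⟨b, hb, rfl⟩ := Finset.mem_image.mp hL
      obtain ⟨a, ha, rfl⟩ := Finset.mem_image.mp hL'
      exact key01 a ha b hb x hxL' hxL
    · rw [hA1] at hL; rw [hA2] at hL'
      obtain ⟨b, hb, rfl⟩ := Finset.mem_image.mp hL
      obtain ⟨c, hc, rfl⟩ := Finset.mem_image.mp hL'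
      exact key12 b hb c hc x hxL hxL'
    · rw [hA2] at hL; rw [hA0] at hL'
      obtain ⟨c, hc, rfl⟩ := Finset.mem_image.mp hL
      obtain ⟨a, ha, rfl⟩ := Finset.mem_image.mp hL'
      exact key02 a ha c hc x hxL' hxL
    · rw [hA2] at hL; rw [hA1] at hL'
      obtain ⟨c, hc, rfl⟩ := Finset.mem_image.mp hL
      obtain ⟨b, hb, rfl⟩ := Finset.mem_image.mp hL'
      exact key12 b hb c hc x hxL' hxL
end

section
/- Let m ≥ 3 and let (𝒜₁,…,𝒜_m; 𝒳) be a net in ℙ²(ℂ) (with no assumption on the cardinalities of the classes, but each 𝒜_i nonempty). Then all classes have the same cardinality: |𝒜_i| = |𝒜_j| for all i, j. -/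
open scoped LinearAlgebra.Projectivization

/-- A net in `ℙ²(ℂ)` (with no assumption on the cardinalities of the classes, but each
class nonempty): `m` pairwise disjoint nonempty finite sets of lines together with a finite
set `X` of points such that every point of `X` lies on exactly one line of each class, and
every intersection point of lines from two different classes lies in `X`. -/
structure IsGenNet (m : ℕ) (A : Fin m → Finset (Set P2)) (X : Finset P2) : Prop where
  isLine : ∀ i, ∀ L ∈ A i, IsLine L
  disjoint : ∀ i j, i ≠ j → Disjoint (A i) (A j)
  nonempty : ∀ i, (A i).Nonempty
  point_line : ∀ x ∈ X, ∀ i, ∃! L, L ∈ A i ∧ x ∈ L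
  inter_mem : ∀ i j, i ≠ j → ∀ L ∈ A i, ∀ L' ∈ A j, ∀ x, x ∈ L → x ∈ L' → x ∈ X

lemma lines_meet {L L' : Set P2} (hL : IsLine L) (hL' : IsLine L') (hne : L ≠ L') :
    ∃! x : P2, x ∈ L ∧ x ∈ L' := by
  obtain ⟨W, hW, rfl⟩ := hL
  obtain ⟨W', hW', rfl⟩ := hL'
  have hWne : W ≠ W' := fun e => hne (by rw [e])
  have htot : Module.finrank ℂ (Fin 3 → ℂ) = 3 := by simp
  have hsum : Module.finrank ℂ ↥(W ⊔ W') + Module.finrank ℂ ↥(W ⊓ W')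
      = Module.finrank ℂ ↥W + Module.finrank ℂ ↥W' :=
    Submodule.finrank_sup_add_finrank_inf_eq W W'
  have hsup : Module.finrank ℂ ↥(W ⊔ W') ≤ 3 :=
    le_trans (Submodule.finrank_le _) (le_of_eq htot)
  have hinf_le : Module.finrank ℂ ↥(W ⊓ W') ≤ 2 :=
    hW ▸ Submodule.finrank_mono inf_le_left
  have hinf_ne : Module.finrank ℂ ↥(W ⊓ W') ≠ 2 := by
    intro h2
    have h1 : W ⊓ W' = W := Submodule.eq_of_le_of_finrank_eq inf_le_left (by rw [h2, hW])
    have h2' : W ≤ W' := by rw [← h1]; exact inf_le_right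
    exact hWne (Submodule.eq_of_le_of_finrank_eq h2' (by rw [hW, hW']))
  have h1 : Module.finrank ℂ ↥(W ⊓ W') = 1 := by omega
  refine ⟨Projectivization.mk'' (W ⊓ W') h1, ?_, ?_⟩
  · constructor <;> rw [Set.mem_setOf_eq, Projectivization.submodule_mk'']
    · exact inf_le_left
    · exact inf_le_right
  · rintro y ⟨hy1, hy2⟩
    have hle : y.submodule ≤ W ⊓ W' := le_inf hy1 hy2
    have heq : y.submodule = W ⊓ W' :=
      Submodule.eq_of_le_of_finrank_eq hle (by rw [y.finrank_submodule, h1])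
    apply Projectivization.submodule_injective
    rw [heq, Projectivization.submodule_mk'']

lemma card_class_eq_filter {m : ℕ} {A : Fin m → Finset (Set P2)} {X : Finset P2}
    (h : IsGenNet m A X) {i j : Fin m} (hij : i ≠ j) {L : Set P2} (hL : L ∈ A i)
    [DecidablePred (· ∈ L)] :
    (A j).card = (X.filter (· ∈ L)).card := by
  have hLline := h.isLine i L hL
  have hne : ∀ L' ∈ A j, L ≠ L' := fun L' hL' e =>
    Finset.disjoint_left.mp (h.disjoint i j hij) hL (e ▸ hL')
  have key : ∀ L' (hL' : L' ∈ A j), ∃! x : P2, x ∈ L ∧ x ∈ L' :=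
    fun L' hL' => lines_meet hLline (h.isLine j L' hL') (hne L' hL')
  refine Finset.card_bij (fun L' hL' => (key L' hL').choose) ?_ ?_ ?_
  · intro L' hL'
    obtain ⟨hx1, hx2⟩ := (key L' hL').choose_spec.1
    simp only [Finset.mem_filter]
    exact ⟨h.inter_mem i j hij L hL L' hL' _ hx1 hx2, hx1⟩
  · intro L1 h1 L2 h2 heq
    obtain ⟨hx1, hx2⟩ := (key L1 h1).choose_spec.1
    obtain ⟨hy1, hy2⟩ := (key L2 h2).choose_spec.1
    have hxX := h.inter_mem i j hij L hL L1 h1 _ hx1 hx2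
    exact (h.point_line _ hxX j).unique ⟨h1, hx2⟩ ⟨h2, by simp only at heq; rw [heq]; exact hy2⟩
  · intro x hx
    simp only [Finset.mem_filter] at hx
    obtain ⟨hxX, hxL⟩ := hx
    obtain ⟨L', ⟨hL'j, hxL'⟩, huniq⟩ := h.point_line x hxX j
    exact ⟨L', hL'j, ((key L' hL'j).choose_spec.2 x ⟨hxL, hxL'⟩).symm⟩

/-- In a net in `ℙ²(ℂ)` with `m ≥ 3` classes, all classes have the same cardinality. -/
theorem genNet_card_classes_eq (m : ℕ) (hm : 3 ≤ m)
    (A : Fin m → Finset (Set P2)) (X : Finset P2) (h : IsGenNet m A X) :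
    ∀ i j, (A i).card = (A j).card := by
  intro i j
  rcases eq_or_ne i j with rfl | hij
  · rfl
  obtain ⟨k, hki, hkj⟩ : ∃ k : Fin m, k ≠ i ∧ k ≠ j := by
    by_contra hc
    push_neg at hc
    have hsub : (Finset.univ : Finset (Fin m)) ⊆ {i, j} := by
      intro k _
      rcases eq_or_ne k i with rfl | hne
      · simp
      · simp [hc k hne]
    have hle := Finset.card_le_card hsub
    have h2 : ({i, j} : Finset (Fin m)).card ≤ 2 :=
      (Finset.card_insert_le _ _).trans (by simp)
    simp [Finset.card_univ] at hle
    omega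
  obtain ⟨L, hLk⟩ := h.nonempty k
  classical
  rw [card_class_eq_filter h hki hLk, card_class_eq_filter h hkj hLk]
end

section
/- Let m ≥ 3 and d ≥ 3 be integers, let (𝒜₁,…,𝒜_m; 𝒳) be an (m,d)-net in ℙ²(ℂ), and for each i let f_i ∈ ℂ[x₀,x₁,x₂] be a product of d nonzero linear forms, one for each line of 𝒜_i, where the linear form associated to a line vanishes exactly on the vectors of the 2-dimensional subspace defining that line. Then for every i ∈ {1,…,m} the form f_i lies, up to a nonzero scalar, in the pencil spanned by f₁ and f₂: there exist c ∈ ℂ \ {0} and (μ,λ) ∈ ℂ² \ {(0,0)} such that c·f_i = μ·f₁ + λ·f₂. -/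
open scoped LinearAlgebra.Projectivization

/-- `f` is a (nonzero) linear form in `ℂ[x₀,x₁,x₂]` cutting out the line `L ⊆ ℙ²(ℂ)`:
`f` is a linear form that vanishes exactly on the vectors of the 2-dimensional subspace
defining `L`. -/
def IsDefiningForm (f : MvPolynomial (Fin 3) ℂ) (L : Set P2) : Prop :=
  (∃ c : Fin 3 → ℂ, c ≠ 0 ∧ f = ∑ i, MvPolynomial.C (c i) * MvPolynomial.X i) ∧
    ∀ (v : Fin 3 → ℂ) (hv : v ≠ 0),
      (MvPolynomial.eval v f = 0 ↔ Projectivization.mk ℂ v hv ∈ L)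

/-- `f` is a product of linear forms, one for each line of the class `Ai`, each vanishing
exactly on the subspace defining the corresponding line. -/
def IsClassForm (f : MvPolynomial (Fin 3) ℂ) (Ai : Finset (Set P2)) : Prop :=
  ∃ l : Set P2 → MvPolynomial (Fin 3) ℂ,
    (∀ L ∈ Ai, IsDefiningForm (l L) L) ∧ f = ∏ L ∈ Ai, l L


namespace NetPencil
open MvPolynomial

/-- evaluation commutes with polynomial substitution -/
lemma eval_aeval {α β : Type*} (g : MvPolynomial α ℂ) (σ : α → MvPolynomial β ℂ)
    (x : β → ℂ) : eval x (aeval σ g) = eval (fun i => eval x (σ i)) g := by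
  induction g using MvPolynomial.induction_on with
  | C a => simp
  | add p q hp hq => simp only [map_add]; rw [hp, hq]
  | mul_X p i hp => simp only [map_mul, aeval_X, eval_X]; rw [hp]

/-- eval of a linear form -/
lemma eval_linear {n : ℕ} (c : Fin n → ℂ) (v : Fin n → ℂ) :
    eval v (∑ k, C (c k) * X k) = ∑ k, c k * v k := by
  simp

/-- homogeneous polynomials scale -/
lemma eval_smul_of_isHomogeneous {α : Type*} (g : MvPolynomial α ℂ) (n : ℕ)
    (hg : g.IsHomogeneous n) (a : ℂ) (v : α → ℂ) :
    eval (a • v) g = a ^ n * eval v g := by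
  conv_lhs => rw [g.as_sum]
  conv_rhs => rw [g.as_sum]
  rw [map_sum, map_sum, Finset.mul_sum]
  apply Finset.sum_congr rfl
  intro s hs
  have hsum : s.degree = n := by
    rw [Finsupp.degree_eq_weight_one]; exact hg (mem_support_iff.mp hs)
  rw [eval_monomial, eval_monomial]
  rw [Finsupp.prod, Finsupp.prod]
  have : ∀ i ∈ s.support, (a • v) i ^ s i = a ^ s i * v i ^ s i := by
    intro i _; simp [mul_pow]
  rw [Finset.prod_congr rfl this, Finset.prod_mul_distrib, Finset.prod_pow_eq_pow_sum]
  have : ∑ i ∈ s.support, s i = n := by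
    rw [← hsum]; rfl
  rw [this]; ring

/-- If a polynomial vanishes on the coordinate hyperplane `v 0 = 0`, then `X 0` divides it. -/
lemma X_zero_dvd_of_vanish {n : ℕ} (h : MvPolynomial (Fin (n + 1)) ℂ)
    (hv : ∀ v : Fin (n + 1) → ℂ, v 0 = 0 → eval v h = 0) :
    (X 0 : MvPolynomial (Fin (n + 1)) ℂ) ∣ h := by
  have key : (finSuccEquiv ℂ n h).coeff 0 = 0 := by
    apply MvPolynomial.funext
    intro w
    have := hv (Fin.cons 0 w) (by simp)
    rw [eval_eq_eval_mv_eval'] at this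
    rw [Polynomial.eval_zero_map] at this
    rw [Polynomial.coeff_zero_eq_eval_zero]; exact this
  have : Polynomial.X ∣ finSuccEquiv ℂ n h := Polynomial.X_dvd_iff.mpr key
  obtain ⟨q, hq⟩ := this
  refine ⟨(finSuccEquiv ℂ n).symm q, ?_⟩
  have := congrArg (finSuccEquiv ℂ n).symm hq
  rw [AlgEquiv.symm_apply_apply] at this
  rw [this, map_mul]
  congr 1
  rw [← finSuccEquiv_X_zero (R := ℂ) (n := n), AlgEquiv.symm_apply_apply]


noncomputable section

variable {n : ℕ}

/-- linear substitution attached to a matrix -/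
def subst (M : Matrix (Fin n) (Fin n) ℂ) :
    MvPolynomial (Fin n) ℂ →ₐ[ℂ] MvPolynomial (Fin n) ℂ :=
  aeval (fun k => ∑ j, C (M k j) * X j)

lemma eval_subst (M : Matrix (Fin n) (Fin n) ℂ) (g : MvPolynomial (Fin n) ℂ)
    (v : Fin n → ℂ) : eval v (subst M g) = eval (M.mulVec v) g := by
  rw [subst]
  show eval v (aeval _ g) = _
  rw [eval_aeval]
  have : (fun i => eval v (∑ j, C (M i j) * X j)) = M.mulVec v := by
    funext k
    simp [Matrix.mulVec, dotProduct]
  rw [this]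

lemma subst_subst (M N : Matrix (Fin n) (Fin n) ℂ) (g : MvPolynomial (Fin n) ℂ) :
    subst N (subst M g) = subst (M * N) g := by
  show (subst N) ((subst M) g) = _
  rw [← AlgHom.comp_apply, subst, subst, comp_aeval, subst]
  have : (fun i => (aeval fun k => ∑ j, C (N k j) * X j) (∑ j, C (M i j) * X j))
      = fun k => ∑ j, C ((M * N) k j) * (X j : MvPolynomial (Fin n) ℂ) := by
    funext i
    simp only [map_sum, map_mul, aeval_X, aeval_C, algebraMap_eq]
    simp only [Finset.mul_sum, ← mul_assoc, ← C_mul]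
    rw [Finset.sum_comm]
    simp only [← Finset.sum_mul, ← map_sum, Matrix.mul_apply]
  rw [this]

lemma subst_one (g : MvPolynomial (Fin n) ℂ) : subst 1 g = g := by
  have : subst (1 : Matrix (Fin n) (Fin n) ℂ) = aeval X := by
    rw [subst]
    congr 1
    funext k
    simp [Matrix.one_apply, Finset.sum_ite_eq]
  rw [this]
  simp [aeval_X_left]


/-- If a polynomial vanishes on the kernel of a nonzero linear form, the form divides it. -/
lemma linear_dvd_of_vanish (c : Fin (n + 1) → ℂ) (hc : c ≠ 0)
    (g : MvPolynomial (Fin (n + 1)) ℂ)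
    (hg : ∀ v : Fin (n + 1) → ℂ, (∑ k, c k * v k) = 0 → eval v g = 0) :
    (∑ k, C (c k) * X k) ∣ g := by
  classical
  set φ : (Fin (n + 1) → ℂ) →ₗ[ℂ] ℂ := ∑ k, c k • LinearMap.proj k with hφ
  have hφ_apply : ∀ v, φ v = ∑ k, c k * v k := by
    intro v; simp [hφ]
  obtain ⟨k₀, hk₀⟩ : ∃ k, c k ≠ 0 := by
    by_contra hh; push_neg at hh; exact hc (funext hh)
  set w : Fin (n + 1) → ℂ := fun k => if k = k₀ then (c k₀)⁻¹ else 0 with hw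
  have hφw : φ w = 1 := by
    rw [hφ_apply]
    simp only [hw, mul_ite, mul_zero]
    rw [Finset.sum_ite_eq' Finset.univ k₀ (fun k => c k * (c k₀)⁻¹)]
    simp [hk₀]
  have hrange : LinearMap.range φ = ⊤ := by
    rw [LinearMap.range_eq_top]
    intro a
    exact ⟨a • w, by rw [map_smul, hφw, smul_eq_mul, mul_one]⟩
  have hker : Module.finrank ℂ (LinearMap.ker φ) = n := by
    have h1 := LinearMap.finrank_range_add_finrank_ker φ
    rw [hrange] at h1
    have h2 : Module.finrank ℂ (Fin (n + 1) → ℂ) = n + 1 := by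
      simp [Module.finrank_fin_fun]
    have h3 : Module.finrank ℂ (⊤ : Submodule ℂ ℂ) = 1 := by
      simp [finrank_top]
    omega
  set b := Module.finBasisOfFinrankEq ℂ (LinearMap.ker φ) hker with hb
  set cols : Fin (n + 1) → (Fin (n + 1) → ℂ) :=
    Fin.cons w (fun j => (b j : Fin (n + 1) → ℂ)) with hcols
  set M : Matrix (Fin (n + 1)) (Fin (n + 1)) ℂ := Matrix.of (fun k j => cols j k) with hM
  have hmulVec : ∀ v, M.mulVec v = ∑ j, v j • cols j := by
    intro v; funext k
    simp only [Matrix.mulVec, dotProduct, hM, Matrix.of_apply, Finset.sum_apply,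
      Pi.smul_apply, smul_eq_mul]
    exact Finset.sum_congr rfl (fun j _ => mul_comm _ _)
  have hphiM : ∀ v, φ (M.mulVec v) = v 0 := by
    intro v
    rw [hmulVec, map_sum, Fin.sum_univ_succ]
    have hz : ∀ j : Fin n, φ (v j.succ • cols j.succ) = 0 := by
      intro j
      rw [map_smul]
      have h1 : cols j.succ = (b j : Fin (n + 1) → ℂ) := by simp [hcols]
      have h2 : φ (b j : Fin (n + 1) → ℂ) = 0 := (b j).2
      rw [h1, h2, smul_zero]
    rw [Finset.sum_eq_zero (fun j _ => hz j), add_zero, map_smul]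
    have : cols 0 = w := by simp [hcols]
    rw [this, hφw, smul_eq_mul, mul_one]
  have key : ∀ v, M.mulVec v = 0 → v = 0 := by
    intro v hv
    have h0 : v 0 = 0 := by
      have := hphiM v; rw [hv, map_zero] at this; exact this.symm
    have hsum : (∑ j : Fin n, v j.succ • b j : LinearMap.ker φ) = 0 := by
      apply Subtype.ext
      push_cast [Submodule.coe_sum]
      have := hmulVec v
      rw [hv] at this
      have h2 := this.symm
      rw [Fin.sum_univ_succ] at h2
      have h3 : cols 0 = w := by simp [hcols]
      rw [h3, h0, zero_smul, zero_add] at h2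
      convert h2 using 2 with j
      simp [hcols]
    have hrest := Fintype.linearIndependent_iff.mp b.linearIndependent _ hsum
    funext k
    refine Fin.cases ?_ ?_ k
    · exact h0
    · exact fun j => hrest j
  have hinj : Function.Injective (Matrix.toLin' M) := by
    rw [← LinearMap.ker_eq_bot]
    exact (Submodule.eq_bot_iff _).mpr
      (fun v hv => key v (by simpa [Matrix.toLin'_apply] using hv))
  have hbij : Function.Bijective (Matrix.toLin' M) :=
    ⟨hinj, LinearMap.injective_iff_surjective.mp hinj⟩
  set e := LinearEquiv.ofBijective (Matrix.toLin' M) hbij with he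
  set Nmat := LinearMap.toMatrix' (e.symm.toLinearMap) with hN
  have hcompMN : (Matrix.toLin' M) ∘ₗ e.symm.toLinearMap = LinearMap.id := by
    apply LinearMap.ext
    intro v
    simp only [LinearMap.comp_apply, LinearMap.id_apply, LinearEquiv.coe_coe]
    exact e.apply_symm_apply v
  have hcompNM : e.symm.toLinearMap ∘ₗ (Matrix.toLin' M) = LinearMap.id := by
    apply LinearMap.ext
    intro v
    simp only [LinearMap.comp_apply, LinearMap.id_apply, LinearEquiv.coe_coe]
    exact e.symm_apply_apply v
  have hMN : M * Nmat = 1 := by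
    calc M * Nmat = LinearMap.toMatrix' (Matrix.toLin' M) * Nmat := by
          rw [LinearMap.toMatrix'_toLin']
      _ = LinearMap.toMatrix' ((Matrix.toLin' M) ∘ₗ e.symm.toLinearMap) := by
          rw [LinearMap.toMatrix'_comp]
      _ = 1 := by rw [hcompMN, LinearMap.toMatrix'_id]
  have hNM : Nmat * M = 1 := by
    calc Nmat * M = Nmat * LinearMap.toMatrix' (Matrix.toLin' M) := by
          rw [LinearMap.toMatrix'_toLin']
      _ = LinearMap.toMatrix' (e.symm.toLinearMap ∘ₗ (Matrix.toLin' M)) := by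
          rw [LinearMap.toMatrix'_comp]
      _ = 1 := by rw [hcompNM, LinearMap.toMatrix'_id]
  have hvm : Matrix.vecMul c M = Pi.single 0 1 := by
    funext j
    have h1 : Matrix.vecMul c M j = φ (cols j) := by
      rw [hφ_apply]
      simp [Matrix.vecMul, dotProduct, hM]
    rw [h1]
    refine Fin.cases ?_ ?_ j
    · have : cols 0 = w := by simp [hcols]
      rw [this, hφw]; simp
    · intro i
      have h2 : cols i.succ = (b i : Fin (n + 1) → ℂ) := by simp [hcols]
      have h3 : φ (b i : Fin (n + 1) → ℂ) = 0 := (b i).2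
      rw [h2, h3]
      simp [Pi.single_apply, (Fin.succ_ne_zero i)]
  have hrow : ∀ t, Nmat 0 t = c t := by
    intro t
    have h1 : Matrix.vecMul c (M * Nmat) = c := by rw [hMN, Matrix.vecMul_one]
    rw [← Matrix.vecMul_vecMul, hvm] at h1
    have h2 := congrFun h1 t
    rw [← h2]
    simp only [Matrix.vecMul, dotProduct, Pi.single_apply]
    rw [Finset.sum_eq_single (0 : Fin (n + 1))]
    · simp
    · intro k _ hk; simp [hk]
    · intro hk; exact absurd (Finset.mem_univ _) hk
  have hvanish0 : ∀ v : Fin (n + 1) → ℂ, v 0 = 0 → eval v (subst M g) = 0 := by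
    intro v hv0
    rw [eval_subst]
    apply hg
    rw [← hφ_apply, hphiM v, hv0]
  obtain ⟨h', hh'⟩ := X_zero_dvd_of_vanish (subst M g) hvanish0
  have hgid : g = subst Nmat (subst M g) := by rw [subst_subst, hMN, subst_one]
  rw [hgid, hh', map_mul]
  have hX0 : subst Nmat (X 0) = ∑ k, C (c k) * X k := by
    rw [subst, aeval_X]
    exact Finset.sum_congr rfl (fun k _ => by rw [hrow k])
  rw [hX0]
  exact dvd_mul_right _ _


/-- a cofactor of a homogeneous polynomial is homogeneous -/
lemma isHomogeneous_of_mul {σ : Type*} (p q : MvPolynomial σ ℂ) (a b : ℕ)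
    (hp : p.IsHomogeneous a) (hpq : (p * q).IsHomogeneous b) (hp0 : p ≠ 0) :
    q.IsHomogeneous (b - a) := by
  classical
  have hdecomp := q.sum_homogeneousComponent
  set N := q.totalDegree with hNdef
  -- each component with wrong degree vanishes
  have hcomp : ∀ j, a + j ≠ b → homogeneousComponent j q = 0 := by
    intro j hj
    by_cases hjN : j ≤ N
    swap
    · apply homogeneousComponent_eq_zero
      omega
    have h1 : p * q = ∑ i ∈ Finset.range (N + 1), p * homogeneousComponent i q := by
      rw [← Finset.mul_sum, hdecomp]
    have h2 := congrArg (homogeneousComponent (a + j)) h1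
    rw [homogeneousComponent_of_mem (mem_homogeneousSubmodule _ _ |>.mpr hpq), if_neg hj] at h2
    rw [map_sum] at h2
    have h3 : ∀ i ∈ Finset.range (N + 1),
        homogeneousComponent (a + j) (p * homogeneousComponent i q)
          = if a + j = a + i then p * homogeneousComponent i q else 0 := by
      intro i _
      exact homogeneousComponent_of_mem
        (mem_homogeneousSubmodule _ _ |>.mpr (hp.mul (homogeneousComponent_isHomogeneous i q)))
    rw [Finset.sum_congr rfl h3] at h2
    simp only [add_right_inj] at h2
    rw [Finset.sum_ite_eq (Finset.range (N + 1)) j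
      (fun i => p * homogeneousComponent i q), if_pos (Finset.mem_range.mpr (by omega))] at h2
    rcases mul_eq_zero.mp h2.symm with h | h
    · exact absurd h hp0
    · exact h
  by_cases hab : a ≤ b
  · have hq : q = homogeneousComponent (b - a) q := by
      conv_lhs => rw [← hdecomp]
      rw [Finset.sum_eq_single (b - a)]
      · intro i _ hne
        apply hcomp
        omega
      · intro hnm
        apply homogeneousComponent_eq_zero
        simp only [Finset.mem_range, not_lt] at hnm
        omega
    rw [hq]
    exact homogeneousComponent_isHomogeneous _ q
  · have hq : q = 0 := by
      conv_lhs => rw [← hdecomp]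
      apply Finset.sum_eq_zero
      intro i _
      apply hcomp
      omega
    rw [hq]
    exact (homogeneousSubmodule σ ℂ _).zero_mem


/-- a homogeneous polynomial of degree 0 is a constant -/
lemma eq_C_of_isHomogeneous_zero {σ : Type*} (q : MvPolynomial σ ℂ)
    (hq : q.IsHomogeneous 0) : q = C (coeff 0 q) := by
  classical
  ext s
  rw [coeff_C]
  by_cases hs : (0 : σ →₀ ℕ) = s
  · rw [if_pos hs, ← hs]
  · rw [if_neg hs]
    by_contra hne
    have := hq hne
    apply hs
    have hdeg : s.degree = 0 := by
      rw [Finsupp.degree_eq_weight_one]; exact this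
    exact ((Finsupp.degree_eq_zero_iff s).mp hdeg).symm


/-- A binary homogeneous form of degree `e` vanishing at `e+1` pairwise
non-proportional nonzero points is zero. -/
lemma binary_homog_eq_zero (e : ℕ) (R : MvPolynomial (Fin 2) ℂ) (hR : R.IsHomogeneous e)
    (p : Fin (e + 1) → Fin 2 → ℂ) (hp0 : ∀ j, p j ≠ 0)
    (hpi : ∀ j k, j ≠ k → ∀ a : ℂ, p j ≠ a • p k)
    (hz : ∀ j, eval (p j) R = 0) : R = 0 := by
  induction e generalizing R with
  | zero =>
    have hC := eq_C_of_isHomogeneous_zero R hR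
    have h0 := hz 0
    rw [hC, eval_C] at h0
    rw [hC, h0, map_zero]
  | succ e ih =>
    set c : Fin 2 → ℂ := ![p 0 1, -(p 0 0)] with hcdef
    have hc : c ≠ 0 := by
      intro hzero
      apply hp0 0
      have h1 := congrFun hzero 0
      have h2 := congrFun hzero 1
      simp [hcdef] at h1 h2
      funext k
      fin_cases k <;> simp [h1, h2]
    have hspan : ∀ v : Fin 2 → ℂ, (∑ k, c k * v k) = 0 → ∃ t : ℂ, v = t • p 0 := by
      intro v hv
      rw [Fin.sum_univ_two] at hv
      simp only [hcdef, Matrix.cons_val_zero, Matrix.cons_val_one, Matrix.head_cons] at hv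
      -- hv : p 0 1 * v 0 + -(p 0 0) * v 1 = 0
      by_cases ha : p 0 0 ≠ 0
      · refine ⟨v 0 / p 0 0, ?_⟩
        funext k
        fin_cases k
        · simp; field_simp
        · simp only [Pi.smul_apply, smul_eq_mul, Fin.mk_one]
          field_simp
          linear_combination -hv
      · push_neg at ha
        have hb : p 0 1 ≠ 0 := by
          intro hb
          apply hp0 0
          funext k
          fin_cases k <;> simp [ha, hb]
        have hv0 : v 0 = 0 := by
          rw [ha] at hv
          simp only [neg_zero, zero_mul, add_zero] at hv
          rcases mul_eq_zero.mp hv with h | h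
          · exact absurd h hb
          · exact h
        refine ⟨v 1 / p 0 1, ?_⟩
        funext k
        fin_cases k
        · simp [hv0, ha]
        · simp; field_simp
    have hker : ∀ v : Fin 2 → ℂ, (∑ k, c k * v k) = 0 → eval v R = 0 := by
      intro v hv
      obtain ⟨t, rfl⟩ := hspan v hv
      rw [eval_smul_of_isHomogeneous R (e + 1) hR]
      rw [hz 0, mul_zero]
    have hdvd := linear_dvd_of_vanish (n := 1) c hc R hker
    obtain ⟨R', hR'⟩ := hdvd
    have hlhom : (∑ k, C (c k) * X k : MvPolynomial (Fin 2) ℂ).IsHomogeneous 1 := by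
      apply IsHomogeneous.sum
      intro k _
      exact isHomogeneous_C_mul_X (c k) k
    have hlne : (∑ k, C (c k) * X k : MvPolynomial (Fin 2) ℂ) ≠ 0 := by
      obtain ⟨k', hk'⟩ : ∃ k, c k ≠ 0 := by
        by_contra hh; push_neg at hh; exact hc (funext hh)
      intro hzero
      have := eval_linear c (Pi.single k' 1)
      rw [hzero, map_zero] at this
      apply hk'
      have h2 : ∑ k, c k * (Pi.single k' 1 : Fin 2 → ℂ) k = c k' := by
        simp [Pi.single_apply, mul_ite, Finset.sum_ite_eq']
      rw [h2] at this
      exact this.symm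
    have hR'hom : R'.IsHomogeneous e := by
      have := isHomogeneous_of_mul _ R' 1 (e + 1) hlhom (by rw [← hR']; exact hR) hlne
      simpa using this
    have hlnz : ∀ j : Fin (e + 1), eval (p j.succ) (∑ k, C (c k) * X k) ≠ 0 := by
      intro j hzero
      rw [eval_linear] at hzero
      obtain ⟨t, ht⟩ := hspan _ hzero
      exact hpi j.succ 0 (Fin.succ_ne_zero j) t ht
    have hz' : ∀ j : Fin (e + 1), eval (p j.succ) R' = 0 := by
      intro j
      have := hz j.succ
      rw [hR', map_mul] at this
      rcases mul_eq_zero.mp this with h | h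
      · exact absurd h (hlnz j)
      · exact h
    have hR'0 : R' = 0 := by
      apply ih R' hR'hom (fun j => p j.succ)
      · exact fun j => hp0 j.succ
      · intro j k hjk a
        exact hpi j.succ k.succ (fun hh => hjk (Fin.succ_injective _ hh)) a
      · exact hz'
    rw [hR', hR'0, mul_zero]


/-- A homogeneous form of degree `e ≥ 1` on `ℂ³` vanishing at `e+1` pairwise
non-proportional nonzero vectors of a plane `W` vanishes on all of `W`. -/
lemma vanish_on_plane (g : MvPolynomial (Fin 3) ℂ) (e : ℕ) (he : 1 ≤ e)
    (hg : g.IsHomogeneous e) (W : Submodule ℂ (Fin 3 → ℂ)) (hW : Module.finrank ℂ W = 2)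
    (v : Fin (e + 1) → Fin 3 → ℂ) (hvW : ∀ j, v j ∈ W) (hv0 : ∀ j, v j ≠ 0)
    (hvi : ∀ j k, j ≠ k → ∀ a : ℂ, v j ≠ a • v k)
    (hz : ∀ j, eval (v j) g = 0) :
    ∀ w ∈ W, eval w g = 0 := by
  classical
  have h01 : (0 : Fin (e + 1)) ≠ 1 := by
    intro hh
    have h2 := congrArg Fin.val hh
    rw [Fin.val_zero, Fin.val_one'] at h2
    rw [Nat.mod_eq_of_lt (by omega)] at h2
    omega
  have hind : LinearIndependent ℂ ![v 0, v 1] := by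
    rw [linearIndependent_fin2]
    constructor
    · simpa using hv0 1
    · intro a ha
      simp only [Matrix.cons_val_one, Matrix.head_cons, Matrix.cons_val_zero] at ha
      exact hvi 0 1 h01 a ha.symm
  have hspan : Submodule.span ℂ {v 0, v 1} = W := by
    apply Submodule.eq_of_le_of_finrank_le
    · rw [Submodule.span_le]
      intro x hx
      rcases hx with h | h
      · rw [h]; exact hvW 0
      · rw [Set.mem_singleton_iff.mp h]; exact hvW 1
    · rw [hW]
      have hrange : Set.range ![v 0, v 1] = {v 0, v 1} := by
        ext x
        simp [Fin.exists_fin_two]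
        tauto
      have := finrank_span_eq_card hind
      rw [hrange] at this
      rw [this]
      simp
  have hmem : ∀ j, ∃ s t : ℂ, s • v 0 + t • v 1 = v j := by
    intro j
    rw [← Submodule.mem_span_pair, hspan]
    exact hvW j
  choose s t hst using hmem
  set σf : Fin 3 → MvPolynomial (Fin 2) ℂ :=
    fun i => C (v 0 i) * X 0 + C (v 1 i) * X 1 with hσf
  set R : MvPolynomial (Fin 2) ℂ := aeval σf g with hRdef
  have hRhom : R.IsHomogeneous e := by
    have hσ : ∀ i, (σf i).IsHomogeneous 1 := by
      intro i
      exact (isHomogeneous_C_mul_X _ 0).add (isHomogeneous_C_mul_X _ 1)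
    have := hg.aeval σf hσ
    simp at this; exact this
  have hRe : ∀ st : Fin 2 → ℂ, eval st R = eval (st 0 • v 0 + st 1 • v 1) g := by
    intro st
    rw [hRdef, eval_aeval]
    have hfun : (fun i => eval st (σf i)) = st 0 • v 0 + st 1 • v 1 := by
      funext i
      simp only [hσf, map_add, map_mul, eval_C, eval_X, Pi.add_apply, Pi.smul_apply, smul_eq_mul]
      ring
    rw [hfun]
  set p : Fin (e + 1) → Fin 2 → ℂ := fun j => ![s j, t j] with hpdef
  have hp0 : ∀ j, p j ≠ 0 := by
    intro j hpj
    apply hv0 j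
    have hs := congrFun hpj 0
    have ht := congrFun hpj 1
    simp [hpdef] at hs ht
    rw [← hst j, hs, ht, zero_smul, zero_smul, add_zero]
  have hpi : ∀ j k, j ≠ k → ∀ a : ℂ, p j ≠ a • p k := by
    intro j k hjk a hpa
    apply hvi j k hjk a
    have hs' := congrFun hpa 0
    have ht' := congrFun hpa 1
    simp [hpdef] at hs' ht'
    rw [← hst j, ← hst k, hs', ht']
    simp only [smul_add, smul_smul]
  have hpz : ∀ j, eval (p j) R = 0 := by
    intro j
    rw [hRe]
    have : p j 0 • v 0 + p j 1 • v 1 = v j := by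
      simp only [hpdef]
      simpa using hst j
    rw [this]
    exact hz j
  have hR0 : R = 0 := binary_homog_eq_zero e R hRhom p hp0 hpi hpz
  intro w hw
  obtain ⟨sw, tw, hsw⟩ := Submodule.mem_span_pair.mp (by rw [hspan]; exact hw)
  have := hRe ![sw, tw]
  rw [hR0, map_zero] at this
  have h2 : (![sw, tw] : Fin 2 → ℂ) 0 • v 0 + (![sw, tw] : Fin 2 → ℂ) 1 • v 1 = w := by
    simpa using hsw
  rw [h2] at this
  exact this.symm


open Projectivization in
/-- defining forms detect membership in the plane, for all vectors -/
lemma defining_eval (L : Set P2) (W : Submodule ℂ (Fin 3 → ℂ))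
    (hLW : L = {p : P2 | Projectivization.submodule p ≤ W})
    (fL : MvPolynomial (Fin 3) ℂ) (hd : IsDefiningForm fL L) :
    ∀ v : Fin 3 → ℂ, (eval v fL = 0 ↔ v ∈ W) := by
  intro v
  by_cases hv : v = 0
  · subst hv
    obtain ⟨c, -, hcf⟩ := hd.1
    constructor
    · intro _; exact W.zero_mem
    · intro _; rw [hcf]; simp
  · rw [hd.2 v hv, hLW]
    show Projectivization.submodule _ ≤ W ↔ _
    rw [Projectivization.submodule_mk]
    exact Submodule.span_singleton_le_iff_mem v W

/-- membership of a point in a line, in terms of its representative -/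
lemma mem_line_iff_rep (L : Set P2) (W : Submodule ℂ (Fin 3 → ℂ))
    (hLW : L = {p : P2 | Projectivization.submodule p ≤ W}) (x : P2) :
    x ∈ L ↔ x.rep ∈ W := by
  rw [hLW]
  show Projectivization.submodule x ≤ W ↔ _
  rw [Projectivization.submodule_eq]
  exact Submodule.span_singleton_le_iff_mem _ W

/-- representatives of distinct projective points are non-proportional -/
lemma rep_ne_smul_rep (x y : P2) (hxy : x ≠ y) (a : ℂ) : x.rep ≠ a • y.rep := by
  intro hrep
  have ha : a ≠ 0 := by
    rintro rfl
    rw [zero_smul] at hrep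
    exact x.rep_nonzero hrep
  apply hxy
  conv_lhs => rw [← x.mk_rep]
  conv_rhs => rw [← y.mk_rep]
  rw [Projectivization.mk_eq_mk_iff]
  exact ⟨Units.mk0 a ha, by rw [Units.smul_def, Units.val_mk0]; exact hrep.symm⟩

/-- two planes in `ℂ³` have a common nonzero vector -/
lemma exists_common_point (W W' : Submodule ℂ (Fin 3 → ℂ))
    (h2 : Module.finrank ℂ W = 2) (h2' : Module.finrank ℂ W' = 2) :
    ∃ v : Fin 3 → ℂ, v ≠ 0 ∧ v ∈ W ∧ v ∈ W' := by
  have hsum := Submodule.finrank_sup_add_finrank_inf_eq W W'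
  have hle : Module.finrank ℂ (W ⊔ W' : Submodule ℂ (Fin 3 → ℂ)) ≤ 3 := by
    have := Submodule.finrank_le (W ⊔ W')
    simpa [Module.finrank_fin_fun] using this
  have hinf : Module.finrank ℂ (W ⊓ W' : Submodule ℂ (Fin 3 → ℂ)) ≥ 1 := by omega
  have hne : (W ⊓ W' : Submodule ℂ (Fin 3 → ℂ)) ≠ ⊥ := by
    intro hbot
    rw [hbot, finrank_bot] at hinf
    omega
  obtain ⟨v, hvmem, hv0⟩ := Submodule.exists_mem_ne_zero_of_ne_bot hne
  exact ⟨v, hv0, hvmem.1, hvmem.2⟩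

/-- a vector outside a plane exists -/
lemma exists_not_mem_plane (W : Submodule ℂ (Fin 3 → ℂ))
    (hW : Module.finrank ℂ W = 2) : ∃ v : Fin 3 → ℂ, v ∉ W := by
  by_contra hh
  push_neg at hh
  have : W = ⊤ := Submodule.eq_top_iff'.mpr hh
  rw [this] at hW
  rw [finrank_top, Module.finrank_fin_fun] at hW
  omega

/-- enumeration of a finset of known cardinality -/
lemma enum_finset {α : Type*} (s : Finset α) (d : ℕ) (hs : s.card = d) :
    ∃ fe : Fin d → α, Function.Injective fe ∧ ∀ j, fe j ∈ s := by
  refine ⟨fun j => (s.equivFin.symm (Fin.cast hs.symm j) : α), ?_, ?_⟩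
  · intro a b hab
    have := s.equivFin.symm.injective (Subtype.ext hab)
    have h2 := congrArg Fin.val this
    exact Fin.ext h2
  · intro j
    exact (s.equivFin.symm (Fin.cast hs.symm j)).2

/-- avoidance: a vector of a plane W avoiding finitely many other planes -/
lemma exists_avoid (W : Submodule ℂ (Fin 3 → ℂ)) (hW : Module.finrank ℂ W = 2)
    (B : Finset (Set P2)) (WL : Set P2 → Submodule ℂ (Fin 3 → ℂ))
    (hB : ∀ L ∈ B, WL L ≠ W ∧ Module.finrank ℂ (WL L) = 2) :
    ∃ v : Fin 3 → ℂ, v ∈ W ∧ v ≠ 0 ∧ ∀ L ∈ B, v ∉ WL L := by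
  classical
  set b := Module.finBasisOfFinrankEq ℂ W hW with hb
  set w1 : Fin 3 → ℂ := (b 0 : Fin 3 → ℂ) with hw1
  set w2 : Fin 3 → ℂ := (b 1 : Fin 3 → ℂ) with hw2
  have hw1W : w1 ∈ W := (b 0).2
  have hw2W : w2 ∈ W := (b 1).2
  have hindW : LinearIndependent ℂ (fun j : Fin 2 => ((b j : W) : Fin 3 → ℂ)) := by
    have := b.linearIndependent
    exact this.map' W.subtype (Submodule.ker_subtype W)
  have hw2ne : w2 ≠ 0 ∧ ∀ a : ℂ, a • w2 ≠ w1 := by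
    have h2 : LinearIndependent ℂ ![w1, w2] := by
      have : ![w1, w2] = fun j : Fin 2 => ((b j : W) : Fin 3 → ℂ) := by
        funext j; fin_cases j <;> rfl
      rw [this]
      exact hindW
    exact linearIndependent_fin2.mp h2
  -- the W-spanning property
  have hspanW : ∀ w ∈ W, ∃ s t : ℂ, w = s • w1 + t • w2 := by
    intro w hw
    have := b.sum_repr ⟨w, hw⟩
    refine ⟨b.repr ⟨w, hw⟩ 0, b.repr ⟨w, hw⟩ 1, ?_⟩
    calc w = ((⟨w, hw⟩ : W) : Fin 3 → ℂ) := rfl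
      _ = ((∑ i : Fin 2, (b.repr ⟨w, hw⟩) i • b i : W) : Fin 3 → ℂ) := by rw [this]
      _ = (b.repr ⟨w, hw⟩) 0 • w1 + (b.repr ⟨w, hw⟩) 1 • w2 := by
          push_cast [Fin.sum_univ_two]
          rfl
  set Bad : Set ℂ := ⋃ L ∈ B, {τ : ℂ | w1 + τ • w2 ∈ WL L} with hBad
  have hfin : Bad.Finite := by
    apply Set.Finite.biUnion B.finite_toSet
    intro L hL
    apply Set.Subsingleton.finite
    intro τ hτ τ' hτ'
    by_contra hne
    have hdiff : (τ - τ') • w2 ∈ WL L := by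
      have := (WL L).sub_mem hτ hτ'
      simpa [sub_smul, add_sub_add_left_eq_sub] using this
    have hw2mem : w2 ∈ WL L := by
      have := (WL L).smul_mem (τ - τ')⁻¹ hdiff
      rwa [smul_smul, inv_mul_cancel₀ (sub_ne_zero.mpr hne), one_smul] at this
    have hw1mem : w1 ∈ WL L := by
      have := (WL L).sub_mem hτ ((WL L).smul_mem τ hw2mem)
      simpa using this
    have hWle : W ≤ WL L := by
      intro w hw
      obtain ⟨s, t, rfl⟩ := hspanW w hw
      exact (WL L).add_mem ((WL L).smul_mem s hw1mem) ((WL L).smul_mem t hw2mem)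
    have : W = WL L := by
      apply Submodule.eq_of_le_of_finrank_le hWle
      rw [hW, (hB L (by exact_mod_cast hL)).2]
    exact (hB L (by exact_mod_cast hL)).1 this.symm
  obtain ⟨τ, hτ⟩ := hfin.infinite_compl.nonempty
  refine ⟨w1 + τ • w2, W.add_mem hw1W (W.smul_mem τ hw2W), ?_, ?_⟩
  · intro h0
    apply hw2ne.2 (-τ)
    rw [neg_smul]
    exact neg_eq_of_add_eq_zero_left h0
  · intro L hL hmem
    apply hτ
    rw [hBad]
    exact Set.mem_biUnion hL hmem

end
end NetPencil

open NetPencil MvPolynomial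

/-- If for each class `𝒜ᵢ` of an `(m,d)`-net, `f i` is a product of defining linear forms
of the lines of `𝒜ᵢ`, then each `f i` lies, up to a nonzero scalar, in the pencil spanned
by `f 0` and `f 1` (the forms of the first two classes). -/
theorem net_forms_in_pencil (m d : ℕ) (hm : 3 ≤ m) (hd : 3 ≤ d)
    (A : Fin m → Finset (Set P2)) (X : Finset P2) (h : IsNet m d A X)
    (f : Fin m → MvPolynomial (Fin 3) ℂ)
    (hf : ∀ i, IsClassForm (f i) (A i)) :
    ∀ i : Fin m, ∃ c : ℂ, c ≠ 0 ∧ ∃ μ lam : ℂ, (μ, lam) ≠ (0, 0) ∧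
      c • f i = μ • f ⟨0, by omega⟩ + lam • f ⟨1, by omega⟩ := by
  classical
  intro i
  by_cases hieq0 : (i : ℕ) = 0
  · refine ⟨1, one_ne_zero, 1, 0, by simp, ?_⟩
    have hi : i = ⟨0, by omega⟩ := Fin.ext hieq0
    rw [hi]; simp
  by_cases hieq1 : (i : ℕ) = 1
  · refine ⟨1, one_ne_zero, 0, 1, by simp, ?_⟩
    have hi : i = ⟨1, by omega⟩ := Fin.ext hieq1
    rw [hi]; simp
  -- main case
  set i0 : Fin m := ⟨0, by omega⟩ with hi0def
  set i1 : Fin m := ⟨1, by omega⟩ with hi1def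
  have hii0 : i ≠ i0 := fun hh => hieq0 (by rw [hh])
  have hii1 : i ≠ i1 := fun hh => hieq1 (by rw [hh])
  have hi10 : i1 ≠ i0 := fun hh => by
    have := congrArg Fin.val hh
    simp [hi0def, hi1def] at this
  -- choose planes for all lines
  have hWex : ∀ L : Set P2, ∃ W : Submodule ℂ (Fin 3 → ℂ), IsLine L →
      (Module.finrank ℂ W = 2 ∧ L = {p : P2 | Projectivization.submodule p ≤ W}) := by
    intro L
    by_cases hL : IsLine L
    · obtain ⟨W, hW1, hW2⟩ := hL
      exact ⟨W, fun _ => ⟨hW1, hW2⟩⟩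
    · exact ⟨⊥, fun hh => absurd hh hL⟩
  choose WF hWF using hWex
  have hrank : ∀ (j : Fin m) (L : Set P2), L ∈ A j → Module.finrank ℂ (WF L) = 2 :=
    fun j L hj => (hWF L (h.isLine j L hj)).1
  have hLeq : ∀ (j : Fin m) (L : Set P2), L ∈ A j →
      L = {p : P2 | Projectivization.submodule p ≤ WF L} :=
    fun j L hj => (hWF L (h.isLine j L hj)).2
  have hmemrep : ∀ (j : Fin m) (L : Set P2), L ∈ A j → ∀ x : P2, x ∈ L ↔ x.rep ∈ WF L :=
    fun j L hj x => NetPencil.mem_line_iff_rep L (WF L) (hLeq j L hj) x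
  have heval : ∀ (j : Fin m) (L : Set P2), L ∈ A j →
      ∀ lf : MvPolynomial (Fin 3) ℂ, IsDefiningForm lf L →
      ∀ v : Fin 3 → ℂ, (eval v lf = 0 ↔ v ∈ WF L) :=
    fun j L hj lf hdf v => NetPencil.defining_eval L (WF L) (hLeq j L hj) lf hdf v
  have hWne : ∀ (j j' : Fin m) (L L' : Set P2), L ∈ A j → L' ∈ A j' → L ≠ L' →
      WF L ≠ WF L' := by
    intro j j' L L' hj hj' hne hWW
    apply hne
    rw [hLeq j L hj, hLeq j' L' hj', hWW]
  have hdisj : ∀ (j j' : Fin m), j ≠ j' → ∀ L, L ∈ A j → L ∈ A j' → False :=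
    fun j j' hne L h1 h2 => Finset.disjoint_left.mp (h.disjoint j j' hne) h1 h2
  have huniq : ∀ x ∈ X, ∀ (j : Fin m) (L L' : Set P2), L ∈ A j → L' ∈ A j →
      x ∈ L → x ∈ L' → L = L' := by
    intro x hx j L L' h1 h2 hx1 hx2
    obtain ⟨Lu, -, hu⟩ := h.point_line x hx j
    rw [hu L ⟨h1, hx1⟩, hu L' ⟨h2, hx2⟩]
  obtain ⟨l0, hl0, hf0⟩ := hf i0
  obtain ⟨l1, hl1, hf1⟩ := hf i1
  obtain ⟨li, hli, hfi⟩ := hf i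
  -- linear forms are homogeneous of degree 1 and nonzero
  have hlin1 : ∀ (lf : MvPolynomial (Fin 3) ℂ) (L : Set P2), IsDefiningForm lf L →
      lf.IsHomogeneous 1 := by
    intro lf L hdf
    obtain ⟨c, -, hcf⟩ := hdf.1
    rw [hcf]
    exact MvPolynomial.IsHomogeneous.sum _ _ _ (fun k _ => isHomogeneous_C_mul_X (c k) k)
  have hlnz : ∀ (j : Fin m) (L : Set P2), L ∈ A j →
      ∀ lf : MvPolynomial (Fin 3) ℂ, IsDefiningForm lf L → lf ≠ 0 := by
    intro j L hj lf hdf heq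
    obtain ⟨v, hv⟩ := NetPencil.exists_not_mem_plane (WF L) (hrank j L hj)
    apply hv
    rw [← heval j L hj lf hdf v, heq, map_zero]
  have hfhom : ∀ (j : Fin m) (lj : Set P2 → MvPolynomial (Fin 3) ℂ),
      (∀ L ∈ A j, IsDefiningForm (lj L) L) → (∏ L ∈ A j, lj L).IsHomogeneous d := by
    intro j lj hdef
    have := MvPolynomial.IsHomogeneous.prod (A j) lj (fun _ => 1)
      (fun L hL => hlin1 _ _ (hdef L hL))
    simpa [Finset.sum_const, h.card_eq j, smul_eq_mul] using this
  -- base line and avoidance point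
  obtain ⟨L₀, hL₀⟩ := Finset.card_pos.mp (show 0 < (A i).card by rw [h.card_eq i]; omega)
  have hB₀ : ∀ L' ∈ A i0 ∪ A i1, WF L' ≠ WF L₀ ∧ Module.finrank ℂ (WF L') = 2 := by
    intro L' hL'
    rcases Finset.mem_union.mp hL' with hm' | hm'
    · refine ⟨hWne i0 i L' L₀ hm' hL₀ ?_, hrank i0 L' hm'⟩
      intro hh
      exact hdisj i0 i (Ne.symm hii0) L₀ (hh ▸ hm') hL₀
    · refine ⟨hWne i1 i L' L₀ hm' hL₀ ?_, hrank i1 L' hm'⟩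
      intro hh
      exact hdisj i1 i (Ne.symm hii1) L₀ (hh ▸ hm') hL₀
  obtain ⟨vp, hvpW, hvp0, hvpavoid⟩ :=
    NetPencil.exists_avoid (WF L₀) (hrank i L₀ hL₀) (A i0 ∪ A i1) WF hB₀
  set μ := eval vp (f i1) with hμdef
  set lam := -eval vp (f i0) with hlamdef
  have hfi0v : ∀ v, eval v (f i0) = ∏ L ∈ A i0, eval v (l0 L) := fun v => by
    rw [hf0, map_prod]
  have hfi1v : ∀ v, eval v (f i1) = ∏ L ∈ A i1, eval v (l1 L) := fun v => by
    rw [hf1, map_prod]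
  have hμ0 : μ ≠ 0 := by
    rw [hμdef, hfi1v]
    apply Finset.prod_ne_zero_iff.mpr
    intro L hL heq0
    exact (hvpavoid L (Finset.mem_union_right _ hL)) ((heval i1 L hL _ (hl1 L hL) vp).mp heq0)
  have hlam0 : lam ≠ 0 := by
    rw [hlamdef, neg_ne_zero, hfi0v]
    apply Finset.prod_ne_zero_iff.mpr
    intro L hL heq0
    exact (hvpavoid L (Finset.mem_union_left _ hL)) ((heval i0 L hL _ (hl0 L hL) vp).mp heq0)
  set g := μ • f i0 + lam • f i1 with hgdef
  have hsmul : ∀ (a : ℂ) (p : MvPolynomial (Fin 3) ℂ) (v : Fin 3 → ℂ),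
      eval v (a • p) = a * eval v p := fun a p v => by
    rw [smul_eq_C_mul, map_mul, eval_C]
  have hevalg : ∀ v, eval v g = μ * eval v (f i0) + lam * eval v (f i1) := fun v => by
    rw [hgdef, map_add, hsmul, hsmul]
  have hghom : g.IsHomogeneous d := by
    have h0 := hfhom i0 l0 hl0
    rw [← hf0] at h0
    have h1 := hfhom i1 l1 hl1
    rw [← hf1] at h1
    exact (homogeneousSubmodule (Fin 3) ℂ d).add_mem
      ((homogeneousSubmodule (Fin 3) ℂ d).smul_mem μ h0)
      ((homogeneousSubmodule (Fin 3) ℂ d).smul_mem lam h1)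
  have hgvp : eval vp g = 0 := by
    rw [hevalg, hμdef, hlamdef]; ring
  have hgX : ∀ x ∈ X, eval x.rep g = 0 := by
    intro x hx
    have hz : ∀ (j : Fin m) (lj : Set P2 → MvPolynomial (Fin 3) ℂ),
        (∀ L ∈ A j, IsDefiningForm (lj L) L) → f j = ∏ L ∈ A j, lj L →
        eval x.rep (f j) = 0 := by
      intro j lj hlj hfj
      obtain ⟨Lx, ⟨hLxmem, hLxx⟩, -⟩ := h.point_line x hx j
      rw [hfj, map_prod]
      apply Finset.prod_eq_zero hLxmem
      rw [heval j Lx hLxmem _ (hlj Lx hLxmem) x.rep]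
      exact (hmemrep j Lx hLxmem x).mp hLxx
    rw [hevalg, hz i0 l0 hl0 hf0, hz i1 l1 hl1 hf1]; ring
  have hgne : g ≠ 0 := by
    obtain ⟨L', hL'⟩ := Finset.card_pos.mp (show 0 < (A i0).card by rw [h.card_eq i0]; omega)
    have hcond : ∀ L'' ∈ A i1, WF L'' ≠ WF L' ∧ Module.finrank ℂ (WF L'') = 2 := by
      intro L'' hL''
      refine ⟨hWne i1 i0 L'' L' hL'' hL' ?_, hrank i1 L'' hL''⟩
      intro hh
      exact hdisj i1 i0 hi10 L' (hh ▸ hL'') hL'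
    obtain ⟨v', hv'W, hv'0, hv'avoid⟩ :=
      NetPencil.exists_avoid (WF L') (hrank i0 L' hL') (A i1) WF hcond
    intro hg0
    have hev := hevalg v'
    rw [hg0, map_zero] at hev
    have hfv0 : eval v' (f i0) = 0 := by
      rw [hfi0v]
      exact Finset.prod_eq_zero hL' ((heval i0 L' hL' _ (hl0 L' hL') v').mpr hv'W)
    have hfv1 : eval v' (f i1) ≠ 0 := by
      rw [hfi1v]
      apply Finset.prod_ne_zero_iff.mpr
      intro L hL heq0
      exact (hv'avoid L hL) ((heval i1 L hL _ (hl1 L hL) v').mp heq0)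
    rw [hfv0, mul_zero, zero_add] at hev
    rcases mul_eq_zero.mp hev.symm with hh | hh
    · exact hlam0 hh
    · exact hfv1 hh
  -- enumeration of A i0 and rows of intersection points
  obtain ⟨Len, hLeninj, hLenmem⟩ := NetPencil.enum_finset (A i0) d (h.card_eq i0)
  have hrow : ∀ L ∈ A i, ∃ pts : Fin d → P2, (∀ j, pts j ∈ X) ∧ (∀ j, pts j ∈ L) ∧
      (∀ j, pts j ∈ Len j) ∧ (∀ j k, j ≠ k → pts j ≠ pts k) := by
    intro L hL
    have hex : ∀ j : Fin d, ∃ x : P2, x ∈ X ∧ x ∈ L ∧ x ∈ Len j := by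
      intro j
      obtain ⟨v, hv0, hvW, hvW'⟩ := NetPencil.exists_common_point (WF L) (WF (Len j))
        (hrank i L hL) (hrank i0 _ (hLenmem j))
      have hm1 : Projectivization.mk ℂ v hv0 ∈ L := by
        rw [hLeq i L hL]
        show Projectivization.submodule _ ≤ WF L
        rw [Projectivization.submodule_mk]
        exact (Submodule.span_singleton_le_iff_mem v _).mpr hvW
      have hm2 : Projectivization.mk ℂ v hv0 ∈ Len j := by
        rw [hLeq i0 _ (hLenmem j)]
        show Projectivization.submodule _ ≤ WF (Len j)
        rw [Projectivization.submodule_mk]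
        exact (Submodule.span_singleton_le_iff_mem v _).mpr hvW'
      exact ⟨Projectivization.mk ℂ v hv0,
        h.inter_mem i i0 hii0 L hL (Len j) (hLenmem j) _ hm1 hm2, hm1, hm2⟩
    choose pts h1 h2 h3 using hex
    refine ⟨pts, h1, h2, h3, ?_⟩
    intro j k hjk heqp
    apply hjk
    apply hLeninj
    exact huniq (pts j) (h1 j) i0 (Len j) (Len k) (hLenmem j) (hLenmem k) (h3 j)
      (heqp ▸ h3 k)
  -- the peeling induction
  have main : ∀ k : ℕ, 1 ≤ k → k ≤ d → ∃ S : Finset (Set P2), S ⊆ A i ∧ S.card = k ∧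
      ∃ q : MvPolynomial (Fin 3) ℂ, q.IsHomogeneous (d - k) ∧
        g = (∏ L ∈ S, li L) * q := by
    intro k hk1 hkd
    induction k with
    | zero => omega
    | succ k ihk =>
      rcases Nat.eq_zero_or_pos k with hk0 | hkpos
      · subst hk0
        obtain ⟨pts, hptsX, hptsL, hptsLen, hptsne⟩ := hrow L₀ hL₀
        set vfam : Fin (d + 1) → (Fin 3 → ℂ) := Fin.cons vp (fun j => (pts j).rep)
          with hvfamdef
        have hvpnotline : ∀ j : Fin d, ∀ a : ℂ, vp ≠ a • (pts j).rep := by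
          intro j a hva
          have hrepW : (pts j).rep ∈ WF (Len j) :=
            (hmemrep i0 (Len j) (hLenmem j) (pts j)).mp (hptsLen j)
          apply hvpavoid (Len j) (Finset.mem_union_left _ (hLenmem j))
          rw [hva]
          exact (WF (Len j)).smul_mem a hrepW
        have hWL0 : ∀ w ∈ WF L₀, eval w g = 0 := by
          apply NetPencil.vanish_on_plane g d (by omega) hghom (WF L₀)
            (hrank i L₀ hL₀) vfam
          · intro j
            refine Fin.cases ?_ ?_ j
            · simpa [hvfamdef] using hvpW
            · intro jj
              simp only [hvfamdef, Fin.cons_succ]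
              exact (hmemrep i L₀ hL₀ _).mp (hptsL jj)
          · intro j
            refine Fin.cases ?_ ?_ j
            · simpa [hvfamdef] using hvp0
            · intro jj
              simp only [hvfamdef, Fin.cons_succ]
              exact (pts jj).rep_nonzero
          · intro j k hjk a
            induction j using Fin.cases with
            | zero =>
              induction k using Fin.cases with
              | zero => exact absurd rfl hjk
              | succ kk =>
                simp only [hvfamdef, Fin.cons_zero, Fin.cons_succ]
                exact hvpnotline kk a
            | succ jj =>
              induction k using Fin.cases with
              | zero =>
                simp only [hvfamdef, Fin.cons_zero, Fin.cons_succ]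
                intro hh
                rcases eq_or_ne a 0 with rfl | ha
                · rw [zero_smul] at hh
                  exact (pts jj).rep_nonzero hh
                · apply hvpnotline jj a⁻¹
                  rw [hh, smul_smul, inv_mul_cancel₀ ha, one_smul]
              | succ kk =>
                simp only [hvfamdef, Fin.cons_succ]
                apply NetPencil.rep_ne_smul_rep
                exact hptsne jj kk (fun hh => hjk (congrArg Fin.succ hh))
          · intro j
            refine Fin.cases ?_ ?_ j
            · simpa [hvfamdef] using hgvp
            · intro jj
              simp only [hvfamdef, Fin.cons_succ]
              exact hgX (pts jj) (hptsX jj)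
        obtain ⟨c, hc0, hcf⟩ := (hli L₀ hL₀).1
        obtain ⟨q, hq⟩ := NetPencil.linear_dvd_of_vanish (n := 2) c hc0 g
          (fun v hv => hWL0 v ((heval i L₀ hL₀ _ (hli L₀ hL₀) v).mp
            (by rw [hcf, NetPencil.eval_linear]; exact hv)))
        rw [← hcf] at hq
        refine ⟨{L₀}, Finset.singleton_subset_iff.mpr hL₀, Finset.card_singleton _, q, ?_,
          by rw [Finset.prod_singleton]; exact hq⟩
        have := NetPencil.isHomogeneous_of_mul (li L₀) q 1 d (hlin1 _ _ (hli L₀ hL₀))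
          (by rw [← hq]; exact hghom) (hlnz i L₀ hL₀ _ (hli L₀ hL₀))
        simpa using this
      · obtain ⟨S, hSsub, hScard, q, hqhom, hgS⟩ := ihk (by omega) (by omega)
        set e := d - k with hedef
        have he1 : 1 ≤ e := by omega
        have hek : e + 1 ≤ d := by omega
        have hSssub : S ⊂ A i := Finset.ssubset_iff_subset_ne.mpr
          ⟨hSsub, fun hh => by rw [hh, h.card_eq i] at hScard; omega⟩
        obtain ⟨L, hLA, hLS⟩ := Finset.exists_of_ssubset hSssub
        obtain ⟨pts, hptsX, hptsL, hptsLen, hptsne⟩ := hrow L hLA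
        have hqzero : ∀ j : Fin d, eval (pts j).rep q = 0 := by
          intro j
          have hgz := hgX (pts j) (hptsX j)
          rw [hgS, map_mul, map_prod] at hgz
          have hprodne : (∏ L' ∈ S, eval (pts j).rep (li L')) ≠ 0 := by
            apply Finset.prod_ne_zero_iff.mpr
            intro L' hL' heq0
            have hL'A : L' ∈ A i := hSsub hL'
            have hmemL' : pts j ∈ L' := (hmemrep i L' hL'A (pts j)).mpr
              ((heval i L' hL'A _ (hli L' hL'A) _).mp heq0)
            exact hLS ((huniq (pts j) (hptsX j) i L L' hLA hL'A (hptsL j) hmemL') ▸ hL')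
          rcases mul_eq_zero.mp hgz with hh | hh
          · exact absurd hh hprodne
          · exact hh
        set vfam : Fin (e + 1) → (Fin 3 → ℂ) := fun j => (pts (Fin.castLE hek j)).rep
          with hvfamdef
        have hWL : ∀ w ∈ WF L, eval w q = 0 := by
          apply NetPencil.vanish_on_plane q e he1 hqhom (WF L) (hrank i L hLA) vfam
          · intro j
            exact (hmemrep i L hLA _).mp (hptsL _)
          · intro j
            exact (pts _).rep_nonzero
          · intro j k hjk a
            apply NetPencil.rep_ne_smul_rep
            exact hptsne _ _ (fun hh => hjk (Fin.castLE_injective hek hh))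
          · intro j
            exact hqzero _
        obtain ⟨c, hc0, hcf⟩ := (hli L hLA).1
        obtain ⟨q2, hq2⟩ := NetPencil.linear_dvd_of_vanish (n := 2) c hc0 q
          (fun v hv => hWL v ((heval i L hLA _ (hli L hLA) v).mp
            (by rw [hcf, NetPencil.eval_linear]; exact hv)))
        rw [← hcf] at hq2
        refine ⟨insert L S, Finset.insert_subset hLA hSsub,
          by rw [Finset.card_insert_of_notMem hLS, hScard], q2, ?_, ?_⟩
        · have := NetPencil.isHomogeneous_of_mul (li L) q2 1 e (hlin1 _ _ (hli L hLA))
            (by rw [← hq2]; exact hqhom) (hlnz i L hLA _ (hli L hLA))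
          have harith : e - 1 = d - (k + 1) := by omega
          rwa [harith] at this
        · rw [Finset.prod_insert hLS, hgS, hq2]; ring
  obtain ⟨S, hSsub, hScard, q, hqhom, hgS⟩ := main d (by omega) le_rfl
  have hSA : S = A i := Finset.eq_of_subset_of_card_le hSsub
    (by rw [h.card_eq i, hScard])
  rw [hSA] at hgS
  have hq0hom : q.IsHomogeneous 0 := by simpa using hqhom
  have hqC := NetPencil.eq_C_of_isHomogeneous_zero q hq0hom
  have hc2 : coeff 0 q ≠ 0 := by
    intro h0
    rw [h0, map_zero] at hqC
    rw [hqC, mul_zero] at hgS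
    exact hgne hgS
  refine ⟨coeff 0 q, hc2, μ, lam, ?_, ?_⟩
  · intro hpair
    apply hμ0
    exact (Prod.mk.injEq _ _ _ _ ▸ hpair : _ ∧ _).1
  · have hkey : g = (coeff 0 q) • f i := by
      rw [smul_eq_C_mul, ← hqC, hgS, ← hfi]
      exact mul_comm _ _
    exact (hkey.symm.trans hgdef : (coeff 0 q) • f i = μ • f i0 + lam • f i1)
end

section
/- Let r ≥ 1 and n ≥ 2 be coprime integers with n ≡ 1 (mod r). Then the Dedekind sum satisfies s(r,n) = (n² − n·((r−1)(r−2) + 3r) + r² + 1) / (12·r·n). -/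
open Classical

/-- The sawtooth function `((x))`: `x - ⌊x⌋ - 1/2` if `x` is not an integer, `0` otherwise. -/
noncomputable def sawtooth (x : ℝ) : ℝ :=
  if ∃ n : ℤ, (n : ℝ) = x then 0 else x - ⌊x⌋ - 1 / 2

/-- The Dedekind sum `s(a,b) = Σ_{k=1}^{b-1} ((k/b))·((k·a/b))`. -/
noncomputable def dedekindSum (a b : ℕ) : ℝ :=
  ∑ k ∈ Finset.Icc 1 (b - 1), sawtooth ((k : ℝ) / b) * sawtooth ((k : ℝ) * a / b)

lemma sawtooth_int_add (a : ℤ) (x : ℝ) (h0 : 0 < x) (h1 : x < 1) :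
    sawtooth ((a : ℝ) + x) = x - 1 / 2 := by
  have hni : ¬ ∃ z : ℤ, (z : ℝ) = (a : ℝ) + x := by
    rintro ⟨z, hz⟩
    have hx : ((z - a : ℤ) : ℝ) = x := by push_cast; linarith
    rw [← hx] at h0 h1
    have h0' : (0 : ℤ) < z - a := by exact_mod_cast h0
    have h1' : (z - a : ℤ) < 1 := by exact_mod_cast h1
    omega
  rw [sawtooth, if_neg hni]
  have hfx : ⌊x⌋ = 0 := Int.floor_eq_zero_iff.mpr ⟨le_of_lt h0, h1⟩
  rw [Int.floor_intCast_add, hfx]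
  push_cast
  ring

lemma sawtooth_nat_add (a : ℕ) (x : ℝ) (h0 : 0 < x) (h1 : x < 1) :
    sawtooth ((a : ℝ) + x) = x - 1 / 2 := by
  have := sawtooth_int_add (a : ℤ) x h0 h1
  simpa using this

lemma sawtooth_Ioo (x : ℝ) (h0 : 0 < x) (h1 : x < 1) : sawtooth x = x - 1 / 2 := by
  simpa using sawtooth_int_add 0 x h0 h1

lemma sum_quad (m : ℕ) (b0 b1 b2 : ℝ) :
    ∑ t ∈ Finset.range m, (b0 + b1 * (t : ℝ) + b2 * (t : ℝ) ^ 2)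
      = b0 * m + b1 * ((m : ℝ) ^ 2 - m) / 2
        + b2 * (2 * (m : ℝ) ^ 3 - 3 * (m : ℝ) ^ 2 + m) / 6 := by
  induction m with
  | zero => simp
  | succ k ih =>
    rw [Finset.sum_range_succ, ih]
    push_cast
    ring

/-- For coprime integers `r ≥ 1`, `n ≥ 2` with `n ≡ 1 (mod r)`, the Dedekind sum `s(r,n)`
equals `(n² − n((r−1)(r−2) + 3r) + r² + 1)/(12rn)`. -/
theorem dedekindSum_eq (r n : ℕ) (hr : 1 ≤ r) (hn : 2 ≤ n)
    (hcop : Nat.Coprime r n) (hmod : n % r = 1 % r) :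
    dedekindSum r n =
      ((n : ℝ) ^ 2 - (n : ℝ) * (((r : ℝ) - 1) * ((r : ℝ) - 2) + 3 * (r : ℝ))
          + (r : ℝ) ^ 2 + 1) / (12 * (r : ℝ) * (n : ℝ)) := by
  -- Write n = m*r + 1
  have hdvd : r ∣ n - 1 := (Nat.modEq_iff_dvd' (by omega)).mp (hmod.symm)
  obtain ⟨m, hm⟩ := hdvd
  have hn_eq : n = m * r + 1 := by
    have : r * m = m * r := Nat.mul_comm r m
    omega
  have hm1 : 1 ≤ m := by
    rcases Nat.eq_zero_or_pos m with h | h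
    · subst h; simp at hn_eq; omega
    · exact h
  have hm0 : 0 < m := hm1
  have hNpos : (0 : ℝ) < n := by positivity
  have hn0 : (n : ℝ) ≠ 0 := ne_of_gt hNpos
  have hN : (n : ℝ) = (m : ℝ) * r + 1 := by rw [hn_eq]; push_cast; ring
  have hMpos : (1 : ℝ) ≤ (m : ℝ) := by exact_mod_cast hm1
  have hRpos : (1 : ℝ) ≤ (r : ℝ) := by exact_mod_cast hr
  have hn1 : n - 1 = m * r := by omega
  rw [dedekindSum, hn1]
  have key : ∑ k ∈ Finset.Icc 1 (m * r),
      sawtooth ((k : ℝ) / n) * sawtooth ((k : ℝ) * r / n)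
      = ∑ p ∈ Finset.range r ×ˢ Finset.range m,
        (((p.1 : ℝ) * m + p.2 + 1) / n - 1 / 2) *
          ((((p.2 : ℝ) + 1) * r - p.1) / n - 1 / 2) := by
    refine (Finset.sum_nbij' (fun p : ℕ × ℕ => p.1 * m + p.2 + 1)
      (fun k => ((k - 1) / m, (k - 1) % m)) ?_ ?_ ?_ ?_ ?_).symm
    · -- membership of image in Icc
      intro p hp
      rw [Finset.mem_product, Finset.mem_range, Finset.mem_range] at hp
      rw [Finset.mem_Icc]
      show 1 ≤ p.1 * m + p.2 + 1 ∧ p.1 * m + p.2 + 1 ≤ m * r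
      refine ⟨by omega, ?_⟩
      have h1 : p.1 + 1 ≤ r := hp.1
      have h2 : p.2 + 1 ≤ m := hp.2
      have e1 : p.1 * m + m = (p.1 + 1) * m := by ring
      have e2 : (p.1 + 1) * m ≤ r * m := Nat.mul_le_mul_right m h1
      have e3 : r * m = m * r := Nat.mul_comm r m
      omega
    · -- membership of preimage in product
      intro k hk
      rw [Finset.mem_Icc] at hk
      rw [Finset.mem_product, Finset.mem_range, Finset.mem_range]
      show (k - 1) / m < r ∧ (k - 1) % m < m
      constructor
      · rw [Nat.div_lt_iff_lt_mul hm0]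
        have e3 : r * m = m * r := Nat.mul_comm r m
        omega
      · exact Nat.mod_lt _ hm0
    · -- left inverse
      intro p hp
      rw [Finset.mem_product, Finset.mem_range, Finset.mem_range] at hp
      have h2 : p.2 < m := hp.2
      have hdiv : (p.1 * m + p.2 + 1 - 1) / m = p.1 := by
        rw [Nat.add_sub_cancel, Nat.add_comm, Nat.add_mul_div_right _ _ hm0,
          Nat.div_eq_of_lt h2]
        omega
      have hmod' : (p.1 * m + p.2 + 1 - 1) % m = p.2 := by
        rw [Nat.add_sub_cancel, Nat.add_comm, Nat.add_mul_mod_self_right,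
          Nat.mod_eq_of_lt h2]
      exact Prod.ext hdiv hmod'
    · -- right inverse
      intro k hk
      rw [Finset.mem_Icc] at hk
      have h := Nat.div_add_mod' (k - 1) m
      show (k - 1) / m * m + (k - 1) % m + 1 = k
      omega
    · -- term equality
      intro p hp
      rw [Finset.mem_product, Finset.mem_range, Finset.mem_range] at hp
      obtain ⟨q, t⟩ := p
      simp only at hp ⊢
      have hq : (q : ℝ) + 1 ≤ r := by exact_mod_cast hp.1
      have ht : (t : ℝ) + 1 ≤ m := by exact_mod_cast hp.2
      have hq0 : (0 : ℝ) ≤ q := Nat.cast_nonneg q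
      have ht0 : (0 : ℝ) ≤ t := Nat.cast_nonneg t
      have hkcast : ((q * m + t + 1 : ℕ) : ℝ) = (q : ℝ) * m + t + 1 := by
        push_cast; ring
      -- first factor
      have hx0 : (0 : ℝ) < ((q : ℝ) * m + t + 1) / n := by
        apply div_pos _ hNpos
        nlinarith
      have hx1 : ((q : ℝ) * m + t + 1) / n < 1 := by
        rw [div_lt_one hNpos, hN]
        nlinarith
      have hfirst : sawtooth (((q * m + t + 1 : ℕ) : ℝ) / n)
          = ((q : ℝ) * m + t + 1) / n - 1 / 2 := by
        rw [hkcast]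
        exact sawtooth_Ioo _ hx0 hx1
      -- second factor
      have hy0 : (0 : ℝ) < (((t : ℝ) + 1) * r - q) / n := by
        apply div_pos _ hNpos
        nlinarith
      have hy1 : (((t : ℝ) + 1) * r - q) / n < 1 := by
        rw [div_lt_one hNpos, hN]
        nlinarith
      have hsplit : ((q * m + t + 1 : ℕ) : ℝ) * r / n
          = (q : ℝ) + (((t : ℝ) + 1) * r - q) / n := by
        rw [hkcast]
        field_simp
        rw [hN]
        ring
      have hsecond : sawtooth (((q * m + t + 1 : ℕ) : ℝ) * r / n)
          = (((t : ℝ) + 1) * r - q) / n - 1 / 2 := by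
        rw [hsplit]
        exact sawtooth_nat_add q _ hy0 hy1
      rw [hfirst, hsecond]
  rw [key, Finset.sum_product]
  have inner : ∀ q ∈ Finset.range r,
      ∑ t ∈ Finset.range m,
        (((q : ℝ) * m + t + 1) / n - 1 / 2) * ((((t : ℝ) + 1) * r - q) / n - 1 / 2)
      = ((-(1/3) * ((m:ℝ) * r) - (m:ℝ)^2 + 2 * (m:ℝ)^2 * r - (m:ℝ)^2 * (r:ℝ)^2
            + (1/3) * ((m:ℝ)^3 * r))
          + (-4 * (m:ℝ)^2 + 4 * (m:ℝ)^2 * r) * (q : ℝ)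
          + (-4 * (m:ℝ)^2) * (q : ℝ)^2) / (4 * (n : ℝ)^2) := by
    intro q _
    have step : ∀ t ∈ Finset.range m,
        (((q : ℝ) * m + t + 1) / n - 1 / 2) * ((((t : ℝ) + 1) * r - q) / n - 1 / 2)
        = ((-1 - 2*(q:ℝ) + 2*(r:ℝ) - 2*(m:ℝ)*q - 4*(m:ℝ)*(q:ℝ)^2 + 6*(m:ℝ)*r*q
              - 2*(m:ℝ)*(r:ℝ)^2 - 2*(m:ℝ)^2*r*q + (m:ℝ)^2*(r:ℝ)^2)
            + (-2 - 4*(q:ℝ) + 6*(r:ℝ) - 2*(m:ℝ)*r + 4*(m:ℝ)*r*q - 2*(m:ℝ)*(r:ℝ)^2)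
                * (t : ℝ)
            + (4*(r:ℝ)) * (t : ℝ)^2) / (4 * (n : ℝ)^2) := by
      intro t _
      field_simp
      rw [hN]
      ring
    rw [Finset.sum_congr rfl step, ← Finset.sum_div, sum_quad]
    congr 1
    ring
  rw [Finset.sum_congr rfl inner, ← Finset.sum_div, sum_quad, hN]
  have hmr : ((m : ℝ) * r + 1) ≠ 0 := by positivity
  have hr0 : (r : ℝ) ≠ 0 := by positivity
  field_simp
  ring
end
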